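/- The function f(r) = ∫₀^r ψ(s)g(s) ds is concave on [0, ∞): f''(r) ≤ 0 for all r ≥ 0, and moreover f''(r) = 0 for all r > R. -/

import Mathlib

open Real MeasureTheory intervalIntegral

/-- The auxiliary function ψ(r) = exp(-α·min{r², R²}). -/
noncomputable def psiE (α R r : ℝ) : ℝ := Real.exp (-(α * min (r ^ 2) (R ^ 2)))

/-- Ψ(r) = ∫₀ʳ ψ(s) ds. -/
noncomputable def PsiE (α R r : ℝ) : ℝ := ∫ s in (0:ℝ)..r, psiE α R s

/-- g(r) = 1 - (1/2)·(∫₀^{min{r,R}} Ψ/ψ)/(∫₀^R Ψ/ψ). -/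
noncomputable def gEb (α R r : ℝ) : ℝ :=
  1 - (1 / 2) * (∫ s in (0:ℝ)..(min r R), PsiE α R s / psiE α R s) /
      (∫ s in (0:ℝ)..R, PsiE α R s / psiE α R s)

/-- The Eberle distance function f(r) = ∫₀ʳ ψ(s)·g(s) ds. -/
noncomputable def fEb (α R r : ℝ) : ℝ := ∫ s in (0:ℝ)..r, psiE α R s * gEb α R s

/-! ψ and g are both nonnegative and nonincreasing on `[0, ∞)`, and both are constant on
`[R, ∞)`. Hence `f' = ψ g` is nonincreasing on `[0, ∞)`, which gives concavity and `f'' ≤ 0`,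
and `f'` is constant beyond `R`, which gives `f'' = 0` there. -/

open Set Filter Topology

lemma AntitoneOn.mul_of_nonneg {α : Type*} [Preorder α] {f g : α → ℝ} {s : Set α}
    (hf : AntitoneOn f s) (hg : AntitoneOn g s) (hf₀ : ∀ x ∈ s, 0 ≤ f x)
    (hg₀ : ∀ x ∈ s, 0 ≤ g x) : AntitoneOn (f * g) s :=
  fun _ ha _ hb h ↦ mul_le_mul (hf ha hb h) (hg ha hb h) (hg₀ _ hb) (hf₀ _ ha)

lemma AntitoneOn.deriv_nonpos {g : ℝ → ℝ} {s : Set ℝ} {x : ℝ} (hg : AntitoneOn g s)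
    (hs : UniqueDiffWithinAt ℝ s x) : deriv g x ≤ 0 := by
  by_cases hd : DifferentiableAt ℝ g x
  · rw [← hd.derivWithin hs]
    exact hg.derivWithin_nonpos
  · rw [deriv_zero_of_not_differentiableAt hd]

variable {α R : ℝ}

lemma continuous_psiE : Continuous (psiE α R) := by
  unfold psiE
  fun_prop

lemma psiE_antitoneOn (hα : 0 ≤ α) : AntitoneOn (psiE α R) (Ici 0) := by
  intro x hx y hy hxy
  have hsq : x ^ 2 ≤ y ^ 2 := pow_le_pow_left₀ hx hxy 2
  unfold psiE
  gcongr

lemma psiE_of_le (hR : 0 ≤ R) {r : ℝ} (hr : R ≤ r) : psiE α R r = psiE α R R := by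
  have hsq : R ^ 2 ≤ r ^ 2 := pow_le_pow_left₀ hR hr 2
  simp only [psiE, min_eq_right hsq, min_self]

lemma PsiE_nonneg {r : ℝ} (hr : 0 ≤ r) : 0 ≤ PsiE α R r :=
  integral_nonneg hr fun _ _ ↦ (exp_pos _).le

lemma continuous_PsiE_div_psiE : Continuous fun s ↦ PsiE α R s / psiE α R s :=
  (continuous_primitive (fun _ _ ↦ continuous_psiE.intervalIntegrable _ _) 0).div
    continuous_psiE fun _ ↦ (exp_pos _).ne'

lemma PsiE_div_psiE_nonneg {s : ℝ} (hs : 0 ≤ s) : 0 ≤ PsiE α R s / psiE α R s :=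
  div_nonneg (PsiE_nonneg hs) (exp_pos _).le

noncomputable def psiRatioIntegral (α R r : ℝ) : ℝ :=
  ∫ s in (0:ℝ)..r, PsiE α R s / psiE α R s

lemma gEb_eq (r : ℝ) :
    gEb α R r = 1 - 1 / 2 * psiRatioIntegral α R (min r R) / psiRatioIntegral α R R :=
  rfl

lemma continuous_psiRatioIntegral : Continuous (psiRatioIntegral α R) :=
  continuous_primitive (fun _ _ ↦ continuous_PsiE_div_psiE.intervalIntegrable _ _) 0

lemma psiRatioIntegral_nonneg {r : ℝ} (hr : 0 ≤ r) : 0 ≤ psiRatioIntegral α R r :=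
  integral_nonneg hr fun _ hs ↦ PsiE_div_psiE_nonneg hs.1

lemma psiRatioIntegral_monotoneOn : MonotoneOn (psiRatioIntegral α R) (Ici 0) :=
  fun _ ha _ _ hab ↦ integral_mono_interval le_rfl ha hab
    (ae_restrict_of_forall_mem measurableSet_Ioc fun _ hs ↦ PsiE_div_psiE_nonneg hs.1.le)
    (continuous_PsiE_div_psiE.intervalIntegrable _ _)

lemma continuous_gEb : Continuous (gEb α R) := by
  simp only [funext gEb_eq]
  exact continuous_const.sub <| (continuous_const.mul <|
    continuous_psiRatioIntegral.comp (continuous_id.min continuous_const)).div_const _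

lemma gEb_antitoneOn (hR : 0 ≤ R) : AntitoneOn (gEb α R) (Ici 0) := by
  intro x hx y hy hxy
  have hmono := psiRatioIntegral_monotoneOn (α := α) (R := R)
  have hI : psiRatioIntegral α R (min x R) ≤ psiRatioIntegral α R (min y R) :=
    hmono (le_min hx hR) (le_min hy hR) (min_le_min_right R hxy)
  have hC : 0 ≤ psiRatioIntegral α R R := psiRatioIntegral_nonneg hR
  simp only [gEb_eq]
  gcongr

lemma gEb_nonneg (hR : 0 ≤ R) {r : ℝ} (hr : 0 ≤ r) : 0 ≤ gEb α R r := by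
  have hle : psiRatioIntegral α R (min r R) ≤ psiRatioIntegral α R R :=
    psiRatioIntegral_monotoneOn (le_min hr hR) hR (min_le_right r R)
  have hratio : psiRatioIntegral α R (min r R) / psiRatioIntegral α R R ≤ 1 :=
    div_le_one_of_le₀ hle (psiRatioIntegral_nonneg hR)
  rw [gEb_eq, mul_div_assoc]
  linarith

lemma gEb_of_le {r : ℝ} (hr : R ≤ r) : gEb α R r = gEb α R R := by
  simp only [gEb_eq, min_eq_right hr, min_self]

lemma hasDerivAt_fEb (r : ℝ) : HasDerivAt (fEb α R) (psiE α R r * gEb α R r) r := by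
  have hcont : Continuous fun s ↦ psiE α R s * gEb α R s := continuous_psiE.mul continuous_gEb
  exact integral_hasDerivAt_right (hcont.intervalIntegrable 0 r)
    (hcont.stronglyMeasurableAtFilter _ _) hcont.continuousAt

lemma deriv_fEb : deriv (fEb α R) = psiE α R * gEb α R :=
  funext fun r ↦ (hasDerivAt_fEb r).deriv

lemma deriv_fEb_antitoneOn (hα : 0 ≤ α) (hR : 0 ≤ R) :
    AntitoneOn (deriv (fEb α R)) (Ici 0) := by
  rw [deriv_fEb]
  exact (psiE_antitoneOn hα).mul_of_nonneg (gEb_antitoneOn hR) (fun _ _ ↦ (exp_pos _).le)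
    fun _ hr ↦ gEb_nonneg hR hr

lemma deriv_fEb_of_le (hR : 0 ≤ R) {r : ℝ} (hr : R ≤ r) :
    deriv (fEb α R) r = deriv (fEb α R) R := by
  simp only [deriv_fEb, Pi.mul_apply, psiE_of_le hR hr, gEb_of_le hr]

/-- f is concave on [0,∞): f''(r) ≤ 0 for r ≥ 0 and f''(r) = 0 for r > R. -/
theorem f_concave (α R : ℝ) (hα : 0 < α) (hR : 0 < R) :
    ConcaveOn ℝ (Set.Ici 0) (fEb α R) ∧
    (∀ r : ℝ, 0 ≤ r → deriv (deriv (fEb α R)) r ≤ 0) ∧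
    (∀ r : ℝ, R < r → deriv (deriv (fEb α R)) r = 0) := by
  have hanti := deriv_fEb_antitoneOn hα.le hR.le
  have hdiff : Differentiable ℝ (fEb α R) := fun r ↦ (hasDerivAt_fEb r).differentiableAt
  refine ⟨(hanti.mono interior_subset).concaveOn_of_deriv (convex_Ici 0)
      hdiff.continuous.continuousOn hdiff.differentiableOn,
    fun r hr ↦ hanti.deriv_nonpos (uniqueDiffOn_Ici 0 r hr), fun r hr ↦ ?_⟩
  have hconst : deriv (fEb α R) =ᶠ[𝓝 r] fun _ ↦ deriv (fEb α R) R :=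
    eventually_of_mem (Ioi_mem_nhds hr) fun _ hs ↦ deriv_fEb_of_le hR.le hs.le
  rw [hconst.deriv_eq, deriv_const]
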